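/- (Lemma 2.3: L is term equivalent to (ZMod 12, +, f).) For all x, y ∈ ZMod 12 one has f x y = t x (3*x + y) and t x y = f x (x + y). -/
import Mathlib

/-- The natural projection `ZMod 12 → ZMod 4`. -/
def pi4 : ZMod 12 →+* ZMod 4 := ZMod.castHom (show (4:ℕ) ∣ 12 by norm_num) (ZMod 4)

/-- The cocycle `t` of Vaughan–Lee's loop. -/
def t (x y : ZMod 12) : ZMod 12 :=
  if (pi4 x = 1 ∧ pi4 y = 3) ∨ (pi4 x = 3 ∧ pi4 y = 1) then 4 else 0

open scoped Classical in
/-- `f x y = 4` if `x` is odd and `y ∈ {0,4,8}`, and `f x y = 0` otherwise. -/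
noncomputable def f (x y : ZMod 12) : ZMod 12 :=
  if Odd x ∧ y ∈ ({0, 4, 8} : Set (ZMod 12)) then 4 else 0

theorem stmt_9 :
    ∀ x y : ZMod 12, f x y = t x (3 * x + y) ∧ t x y = f x (x + y) := by
  have hf : ∀ x y : ZMod 12, f x y =
      if (∃ r : ZMod 12, x = 2 * r + 1) ∧ (y = 0 ∨ y = 4 ∨ y = 8) then 4 else 0 := by
    intro x y
    unfold f
    simp only [Set.mem_insert_iff, Set.mem_singleton_iff, Odd]
  intro x y
  rw [hf, hf]
  revert x y
  decide
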